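/- arXiv:1212.2249 — 3 statements merged into one kernel-verified Lean document; each statement's English description precedes it below -/
import Mathlib

section
/- Let k ≥ 1, p₁,…,p_k > 0 real, Λ ≥ 0 real, and let Δ ⊂ ℝᵏ be the simplex { x : xᵢ ≥ 0, x₁/p₁+⋯+x_k/p_k ≤ Λ }. Then for every nonnegative integer δ, the integral over Δ of (x₁+⋯+x_k)^δ with respect to Lebesgue measure equals Λ^{k+δ} · p₁⋯p_k · δ!/(δ+k)! · h_δ(p₁,…,p_k), where h_δ is the complete homogeneous symmetric polynomial of degree δ. -/
/-!
Expanding `(∑ xᵢ)^δ` by the multinomial theorem reduces the claim to the Dirichlet integrals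
`∫_Δ ∏ xᵢ^aᵢ (Λ - ∑ xᵢ/pᵢ)^e = Λ^(k+|a|+e) ∏ pᵢ^(aᵢ+1) ∏ aᵢ! e! / (k+|a|+e)!`.
The factor `(Λ - ∑ xᵢ/pᵢ)^e` is what makes these close under induction on `k`: slicing `Δ` at
`x₀ = y` leaves the simplex of the remaining weights with `Λ` replaced by `Λ - y/p₀`, and the
remaining integral over `y` is a Beta integral. Summing over monomials, the multinomial
coefficient `δ!/∏ aᵢ!` cancels the `∏ aᵢ!`, leaving `δ!/(δ+k)! · ∏ pᵢ · h_δ(p)`.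
-/

open MeasureTheory Finset Nat Set

theorem integral_pow_mul_one_sub_pow (j e : ℕ) :
    ∫ x in (0 : ℝ)..1, x ^ j * (1 - x) ^ e = j ! * e ! / (j + e + 1)! := by
  have hB := Complex.Gamma_mul_Gamma_eq_betaIntegral (s := j + 1) (t := e + 1)
    (by simp; positivity) (by simp; positivity)
  rw [Complex.betaIntegral] at hB
  simp only [add_sub_cancel_right, Complex.cpow_natCast, Complex.Gamma_nat_eq_factorial,
    show (j : ℂ) + 1 + (e + 1) = ((j + e + 1 : ℕ) : ℂ) + 1 by push_cast; ring] at hB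
  apply Complex.ofReal_injective
  rw [← intervalIntegral.integral_ofReal]
  push_cast
  rw [hB, mul_div_cancel_left₀ _ (by exact_mod_cast (j + e + 1).factorial_ne_zero)]

theorem integral_pow_mul_sub_div_pow {p : ℝ} (hp : p ≠ 0) (c : ℝ) (j e : ℕ) :
    ∫ y in (0 : ℝ)..p * c, y ^ j * (c - y / p) ^ e
      = p ^ (j + 1) * c ^ (j + e + 1) * (j ! * e ! / (j + e + 1)!) := by
  have hsub := intervalIntegral.smul_integral_comp_mul_left
    (fun y : ℝ => y ^ j * (c - y / p) ^ e) (a := 0) (b := 1) (p * c)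
  rw [mul_zero, mul_one] at hsub
  have hfactor : ∀ x : ℝ, (p * c * x) ^ j * (c - p * c * x / p) ^ e
      = p ^ j * c ^ (j + e) * (x ^ j * (1 - x) ^ e) := fun x => by
    rw [show c - p * c * x / p = c * (1 - x) by field_simp, mul_pow, mul_pow, mul_pow]; ring
  simp only [hfactor, intervalIntegral.integral_const_mul,
    integral_pow_mul_one_sub_pow, smul_eq_mul] at hsub
  rw [← hsub]; ring

theorem integral_fin_succ_eq_integral_integral_cons {E : Type*} [NormedAddCommGroup E]
    [NormedSpace ℝ E] {α : Type*} [MeasureSpace α] [SigmaFinite (volume : Measure α)] {n : ℕ}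
    {f : (Fin (n + 1) → α) → E} (hf : Integrable f) :
    ∫ x, f x = ∫ y, ∫ z, f (Fin.cons y z) := by
  have hmp := (volume_preserving_piFinSuccAbove (fun _ : Fin (n + 1) => α) 0).symm
  have hcons : ∀ yz : α × (Fin n → α),
      (MeasurableEquiv.piFinSuccAbove (fun _ => α) 0).symm yz = Fin.cons yz.1 yz.2 := fun yz => by
    simp [MeasurableEquiv.piFinSuccAbove_symm_apply, Fin.insertNthEquiv, Fin.insertNth_zero']
  have hfe := (hmp.integrable_comp_emb (MeasurableEquiv.measurableEmbedding _)).2 hf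
  rw [← hmp.integral_comp', Measure.volume_eq_prod]
  exact (integral_prod _ hfe).trans (by simp only [Function.comp_apply, hcons])

def simplex {ι : Type*} [Fintype ι] (p : ι → ℝ) (Λ : ℝ) : Set (ι → ℝ) :=
  {x | (∀ i, 0 ≤ x i) ∧ ∑ i, x i / p i ≤ Λ}

section Simplex

variable {ι : Type*} [Fintype ι] {p : ι → ℝ} {Λ : ℝ}

theorem isClosed_simplex (p : ι → ℝ) (Λ : ℝ) : IsClosed (simplex p Λ) := by
  simp only [simplex, ofPred_and, ofPred_forall]
  exact (isClosed_iInter fun i => isClosed_le continuous_const (continuous_apply i)).inter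
    (isClosed_le (by fun_prop) continuous_const)

theorem simplex_subset_Icc (hp : ∀ i, 0 < p i) : simplex p Λ ⊆ Icc 0 (fun i => p i * Λ) := by
  rintro x ⟨hx, hsum⟩
  refine ⟨hx, fun i => ?_⟩
  have hi : x i / p i ≤ Λ := (single_le_sum (fun j _ => div_nonneg (hx j) (hp j).le)
    (mem_univ i)).trans hsum
  simpa [div_le_iff₀' (hp i)] using hi

theorem isCompact_simplex (hp : ∀ i, 0 < p i) : IsCompact (simplex p Λ) :=
  isCompact_Icc.of_isClosed_subset (isClosed_simplex p Λ) (simplex_subset_Icc hp)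

theorem simplex_of_isEmpty [IsEmpty ι] (hΛ : 0 ≤ Λ) : simplex p Λ = univ := by
  simp [simplex, hΛ]

end Simplex

theorem cons_mem_simplex_iff {k : ℕ} {p : Fin (k + 1) → ℝ} (hp : ∀ i, 0 < p i) {Λ y : ℝ}
    {z : Fin k → ℝ} :
    Fin.cons y z ∈ simplex p Λ ↔ y ∈ Icc 0 (p 0 * Λ) ∧ z ∈ simplex (Fin.tail p) (Λ - y / p 0) := by
  simp only [simplex, mem_ofPred_eq, Set.mem_Icc, Fin.forall_fin_succ, Fin.cons_zero,
    Fin.cons_succ, Fin.sum_univ_succ, Fin.tail]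
  constructor
  · rintro ⟨⟨hy, hz⟩, hsum⟩
    have : 0 ≤ ∑ i, z i / p i.succ := sum_nonneg fun i _ => div_nonneg (hz i) (hp _).le
    exact ⟨⟨hy, (div_le_iff₀' (hp 0)).1 (by linarith)⟩, hz, by linarith⟩
  · rintro ⟨⟨hy, -⟩, hz, hsum⟩
    exact ⟨⟨hy, hz⟩, by linarith⟩

theorem setIntegral_simplex_eq_integral_Icc_setIntegral_simplex {k : ℕ} {p : Fin (k + 1) → ℝ}
    (hp : ∀ i, 0 < p i) {Λ : ℝ} {F : (Fin (k + 1) → ℝ) → ℝ}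
    (hF : IntegrableOn F (simplex p Λ)) :
    ∫ x in simplex p Λ, F x
      = ∫ y in Icc 0 (p 0 * Λ), ∫ z in simplex (Fin.tail p) (Λ - y / p 0), F (Fin.cons y z) := by
  classical
  have hS := (isClosed_simplex p Λ).measurableSet
  rw [← integral_indicator hS, integral_fin_succ_eq_integral_integral_cons
    ((integrable_indicator_iff hS).2 hF), ← integral_indicator measurableSet_Icc]
  congr 1 with y
  by_cases hy : y ∈ Icc 0 (p 0 * Λ)
  · rw [indicator_of_mem hy, ← integral_indicator (isClosed_simplex _ _).measurableSet]
    congr 1 with z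
    simp only [Set.indicator_apply, cons_mem_simplex_iff hp, hy, true_and]
  · rw [indicator_of_notMem hy]
    simp [cons_mem_simplex_iff hp, hy]

section Multinomial

variable {ι : Type*} [Fintype ι] [DecidableEq ι]

theorem Multiset.prod_map_eq_prod_pow_count {M : Type*} [CommMonoid M] (m : Multiset ι)
    (x : ι → M) : (m.map x).prod = ∏ i, x i ^ m.count i := by
  rw [Finset.prod_multiset_map_count]
  exact prod_subset (subset_univ _) fun i _ hi => by
    rw [Multiset.count_eq_zero.2 (by simpa using hi), pow_zero]

theorem Multiset.countPerms_mul_prod_factorial_count (m : Multiset ι) :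
    m.countPerms * ∏ i, (m.count i)! = (Multiset.card m)! := by
  rw [Multiset.countPerms, Finsupp.multinomial_eq_of_support_subset (subset_univ _), mul_comm]
  simpa only [Multiset.toFinsupp_apply, Multiset.sum_count_eq_card fun a _ => mem_univ a]
    using Nat.multinomial_spec univ m.toFinsupp

end Multinomial

theorem setIntegral_simplex_prod_pow_mul_sub_pow {k : ℕ} {p : Fin k → ℝ} (hp : ∀ i, 0 < p i)
    (a : Fin k → ℕ) (e : ℕ) {Λ : ℝ} (hΛ : 0 ≤ Λ) :
    ∫ x in simplex p Λ, (∏ i, x i ^ a i) * (Λ - ∑ i, x i / p i) ^ e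
      = Λ ^ (k + ∑ i, a i + e) * (∏ i, p i ^ (a i + 1)) *
          ((∏ i, ((a i)! : ℝ)) * e ! / (k + ∑ i, a i + e)!) := by
  induction k generalizing e Λ with
  | zero => simp [simplex_of_isEmpty hΛ, measureReal_def, volume_pi, Nat.factorial_ne_zero]
  | succ k ih =>
    set K := k + ∑ i, Fin.tail a i + e
    set C := (∏ i, Fin.tail p i ^ (Fin.tail a i + 1)) *
      ((∏ i, ((Fin.tail a i)! : ℝ)) * e ! / K !)
    have hslice : ∀ y ∈ Icc 0 (p 0 * Λ),
        ∫ z in simplex (Fin.tail p) (Λ - y / p 0),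
          (∏ i, (Fin.cons y z : Fin (k + 1) → ℝ) i ^ a i) *
            (Λ - ∑ i, (Fin.cons y z : Fin (k + 1) → ℝ) i / p i) ^ e
        = C * (y ^ a 0 * (Λ - y / p 0) ^ K) := by
      rintro y ⟨-, hy⟩
      have hc : 0 ≤ Λ - y / p 0 := sub_nonneg.2 ((div_le_iff₀' (hp 0)).2 hy)
      simp only [Fin.prod_univ_succ, Fin.sum_univ_succ, Fin.cons_zero, Fin.cons_succ,
        sub_add_eq_sub_sub, mul_assoc]
      have hz := ih (p := Fin.tail p) (fun i => hp i.succ) (Fin.tail a) e hc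
      simp only [C, K, Fin.tail] at hz ⊢
      rw [integral_const_mul, hz]
      ring
    rw [setIntegral_simplex_eq_integral_Icc_setIntegral_simplex hp
        ((Continuous.continuousOn (by fun_prop)).integrableOn_compact (isCompact_simplex hp)),
      setIntegral_congr_fun measurableSet_Icc hslice, integral_const_mul,
      integral_Icc_eq_integral_Ioc, ← intervalIntegral.integral_of_le
        (mul_nonneg (hp 0).le hΛ), integral_pow_mul_sub_div_pow (hp 0).ne']
    have hdeg : a 0 + K + 1 = k + 1 + ∑ i, a i + e := by
      simp only [K, Fin.sum_univ_succ, Fin.tail]; ring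
    rw [hdeg, Fin.prod_univ_succ (fun i => p i ^ (a i + 1)),
      Fin.prod_univ_succ (fun i => ((a i)! : ℝ))]
    simp only [C, Fin.tail]
    field_simp

theorem countPerms_mul_setIntegral_simplex_prod_map {k : ℕ} {p : Fin k → ℝ}
    (hp : ∀ i, 0 < p i) {Λ : ℝ} (hΛ : 0 ≤ Λ) (m : Multiset (Fin k)) :
    m.countPerms * ∫ x in simplex p Λ, (m.map x).prod
      = Λ ^ (k + Multiset.card m) * (∏ i, p i) *
          (((Multiset.card m)! : ℝ) / (k + Multiset.card m)!) * (m.map p).prod := by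
  have hperm := congrArg (Nat.cast (R := ℝ)) m.countPerms_mul_prod_factorial_count
  have hdirichlet := setIntegral_simplex_prod_pow_mul_sub_pow hp (m.count ·) 0 hΛ
  push_cast at hperm
  simp only [pow_zero, mul_one, add_zero, factorial_zero, cast_one,
    Multiset.sum_count_eq_card fun a _ => mem_univ a] at hdirichlet
  simp only [Multiset.prod_map_eq_prod_pow_count, hdirichlet, ← hperm, pow_succ,
    prod_mul_distrib]
  ring

theorem stmt_6_general (k : ℕ) (p : Fin k → ℝ) (hp : ∀ i, 0 < p i)
    (Λ : ℝ) (hΛ : 0 ≤ Λ) (δ : ℕ) :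
    ∫ x in {x : Fin k → ℝ | (∀ i, 0 ≤ x i) ∧ ∑ i, x i / p i ≤ Λ},
        (∑ i, x i) ^ δ ∂volume
      = Λ ^ (k + δ) * (∏ i, p i) * ((δ.factorial : ℝ) / (δ + k).factorial) *
          ∑ m ∈ (Finset.univ : Finset (Fin k)).sym δ,
            ((m : Multiset (Fin k)).map p).prod := by
  change ∫ x in simplex p Λ, _ = _
  simp_rw [Finset.sum_pow]
  rw [integral_finsetSum _ fun m _ => (Continuous.continuousOn (by fun_prop)).integrableOn_compact
    (isCompact_simplex hp), mul_sum]
  refine sum_congr rfl fun ⟨m, hm⟩ _ => ?_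
  rw [integral_const_mul, countPerms_mul_setIntegral_simplex_prod_map hp hΛ, hm, add_comm δ]
  rfl

/-- ∫_Δ (x₁+⋯+x_k)^δ dx = Λ^{k+δ}·p₁⋯p_k·δ!/(δ+k)!·h_δ(p), where Δ is the
simplex { x ≥ 0 : Σ xᵢ/pᵢ ≤ Λ } and h_δ is the complete homogeneous symmetric
polynomial of degree δ. -/
theorem stmt_6 (k : ℕ) (hk : 1 ≤ k) (p : Fin k → ℝ) (hp : ∀ i, 0 < p i)
    (Λ : ℝ) (hΛ : 0 ≤ Λ) (δ : ℕ) :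
    ∫ x in {x : Fin k → ℝ | (∀ i, 0 ≤ x i) ∧ ∑ i, x i / p i ≤ Λ},
        (∑ i, x i) ^ δ ∂volume
      = Λ ^ (k + δ) * (∏ i, p i) * ((δ.factorial : ℝ) / (δ + k).factorial) *
          ∑ m ∈ (Finset.univ : Finset (Fin k)).sym δ,
            ((m : Multiset (Fin k)).map p).prod :=
  stmt_6_general k p hp Λ hΛ δ
end

section
/- Let 1 ≤ k ≤ n, let p₁,…,p_k > 0 be reals, and for each i let dᵢ ≥ max(p₁,…,p_k). For λ > 0 define P(λ, d) = { u ∈ ℝⁿ : uᵢ ≥ 0, u₁+⋯+uₙ ≤ λd, u₁/p₁+⋯+u_k/p_k ≥ λ }. Then for λ₁, λ₂ > 0 and admissible d, d', the Minkowski sum P(λ₁, d) + P(λ₂, d') equals { u ∈ ℝⁿ : uᵢ ≥ 0, Σuᵢ ≤ λ₁d + λ₂d', Σ_{j≤k} uⱼ/pⱼ ≥ λ₁ + λ₂ }. -/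
open Finset Pointwise

/-! The inclusion `⊆` is the additivity of the three constraints. Conversely, split `u = h + τ`
into its part `h` on the first `k` coordinates and the rest `τ`, and take
`a = t • h + r • τ`, `b = (1 - t) • h + (1 - r) • τ`. Since every `pⱼ ≤ d, d'`, the mass of `h`
is at most `d` (and `d'`) times its weight `T = ∑ uⱼ / pⱼ`, which makes the four linear
conditions on `t` (weights at least `λ₁`, `λ₂`; masses of `t • h`, `(1 - t) • h` at most
`λ₁ d`, `λ₂ d'`) compatible. The tail `τ` carries no weight, so `r` only has to share out
the mass budget that is left. -/

theorem exists_share_of_ratio_bounds {T A l₁ l₂ c₁ c₂ : ℝ} (hT : 0 < T) (hA : 0 < A)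
    (hl₁ : 0 ≤ l₁) (hl₂ : 0 ≤ l₂) (hlT : l₁ + l₂ ≤ T) (hAc : A ≤ c₁ + c₂)
    (h₁ : l₁ * A ≤ c₁ * T) (h₂ : l₂ * A ≤ c₂ * T) :
    ∃ t ∈ Set.Icc (0 : ℝ) 1,
      l₁ ≤ t * T ∧ l₂ ≤ (1 - t) * T ∧ t * A ≤ c₁ ∧ (1 - t) * A ≤ c₂ := by
  obtain ⟨t, ⟨hlt, htl⟩, hct, htc⟩ :
      (Set.Icc (l₁ / T) (1 - l₂ / T) ∩ Set.Icc (1 - c₂ / A) (c₁ / A)).Nonempty := by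
    rw [Set.Icc_inter_Icc, Set.nonempty_Icc]
    refine sup_le (le_inf ?_ ?_) (le_inf ?_ ?_)
    · rwa [le_sub_iff_add_le, ← add_div, div_le_one hT]
    · rwa [div_le_div_iff₀ hT hA]
    · rwa [sub_le_sub_iff_left, div_le_div_iff₀ hT hA]
    · rwa [sub_le_iff_le_add, ← add_div, le_div_iff₀ hA, one_mul]
  have ht₀ : 0 ≤ t := (div_nonneg hl₁ hT.le).trans hlt
  have ht₁ : t ≤ 1 := htl.trans (sub_le_self 1 (div_nonneg hl₂ hT.le))
  rw [div_le_iff₀ hT] at hlt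
  rw [le_sub_comm, div_le_iff₀ hT] at htl
  rw [sub_le_comm, le_div_iff₀ hA] at hct
  rw [le_div_iff₀ hA] at htc
  exact ⟨t, ⟨ht₀, ht₁⟩, hlt, htl, htc, hct⟩

theorem exists_share_of_le_add {B c₁ c₂ : ℝ} (hB : 0 ≤ B) (hc₁ : 0 ≤ c₁) (hc₂ : 0 ≤ c₂)
    (hBc : B ≤ c₁ + c₂) :
    ∃ r ∈ Set.Icc (0 : ℝ) 1, r * B ≤ c₁ ∧ (1 - r) * B ≤ c₂ := by
  rcases hB.eq_or_lt with rfl | hB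
  · exact ⟨0, ⟨le_rfl, zero_le_one⟩, by simpa using hc₁, by simpa using hc₂⟩
  have hrB : min 1 (c₁ / B) * B = min B c₁ := by
    rw [min_mul_of_nonneg _ _ hB.le, one_mul, div_mul_cancel₀ _ hB.ne']
  refine ⟨min 1 (c₁ / B), ⟨le_min zero_le_one (div_nonneg hc₁ hB.le), min_le_left _ _⟩,
    hrB ▸ min_le_right _ _, ?_⟩
  rw [sub_mul, one_mul, hrB]
  rcases min_choice B c₁ with hm | hm <;> rw [hm] <;> linarith

namespace TruncatedSimplex

variable {n k : ℕ} (hkn : k ≤ n) (p : Fin k → ℝ)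

noncomputable def weight : (Fin n → ℝ) →ₗ[ℝ] ℝ where
  toFun u := ∑ j : Fin k, u (Fin.castLE hkn j) / p j
  map_add' u v := by simp only [Pi.add_apply, add_div, sum_add_distrib]
  map_smul' c u := by
    simp only [Pi.smul_apply, smul_eq_mul, mul_div_assoc, mul_sum, RingHom.id_apply]

/-- The truncated simplex `P(λ, d)` is `polytope hkn p (λ * d) λ`. -/
def polytope (c l : ℝ) : Set (Fin n → ℝ) :=
  {u | 0 ≤ u ∧ ∑ i, u i ≤ c ∧ l ≤ weight hkn p u}

theorem polytope_add_subset {c₁ c₂ l₁ l₂ : ℝ} :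
    polytope hkn p c₁ l₁ + polytope hkn p c₂ l₂ ⊆ polytope hkn p (c₁ + c₂) (l₁ + l₂) := by
  rintro _ ⟨a, ⟨ha, hac, hal⟩, b, ⟨hb, hbc, hbl⟩, rfl⟩
  refine ⟨add_nonneg ha hb, ?_, ?_⟩
  · simpa only [Pi.add_apply, sum_add_distrib] using add_le_add hac hbc
  · rw [map_add]
    exact add_le_add hal hbl

theorem smul_add_smul_mem_polytope {h τ : Fin n → ℝ} (hh : 0 ≤ h) (hτ : 0 ≤ τ)
    (hwτ : weight hkn p τ = 0) {t r c l : ℝ} (ht : 0 ≤ t) (hr : 0 ≤ r)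
    (hc : t * ∑ i, h i + r * ∑ i, τ i ≤ c) (hl : l ≤ t * weight hkn p h) :
    t • h + r • τ ∈ polytope hkn p c l := by
  refine ⟨add_nonneg (smul_nonneg ht hh) (smul_nonneg hr hτ), ?_, ?_⟩
  · simpa only [Pi.add_apply, Pi.smul_apply, smul_eq_mul, sum_add_distrib, ← mul_sum] using hc
  · simpa only [map_add, map_smul, hwτ, smul_eq_mul, mul_zero, add_zero] using hl

noncomputable def head (u : Fin n → ℝ) : Fin n → ℝ :=
  (Set.range (Fin.castLE hkn)).indicator u

variable {hkn p}

theorem head_nonneg {u : Fin n → ℝ} (hu : 0 ≤ u) : 0 ≤ head hkn u :=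
  fun i => Set.indicator_nonneg (fun i _ => hu i) i

theorem head_le {u : Fin n → ℝ} (hu : 0 ≤ u) : head hkn u ≤ u :=
  Set.indicator_le_self' fun i _ => hu i

theorem weight_head (u : Fin n → ℝ) : weight hkn p (head hkn u) = weight hkn p u := by
  simp [weight, head]

theorem sum_head_pos {u : Fin n → ℝ} (hu : 0 ≤ u) (hw : 0 < weight hkn p u) :
    0 < ∑ i, head hkn u i :=
  Fintype.sum_pos <| (head_nonneg hu).lt_of_ne fun h0 =>
    hw.ne' (by rw [← weight_head, ← h0, map_zero])

theorem sum_head_le_mul_weight (hp : ∀ j, 0 < p j) {d : ℝ} (hd : ∀ j, p j ≤ d)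
    {u : Fin n → ℝ} (hu : 0 ≤ u) : ∑ i, head hkn u i ≤ d * weight hkn p u := by
  rw [← Fintype.sum_of_injective (Fin.castLE hkn) (Fin.castLE_injective hkn)
    (fun j => u (Fin.castLE hkn j)) (head hkn u) (fun i hi => Set.indicator_of_notMem hi u)
    (fun j => (Set.indicator_of_mem (Set.mem_range_self j) u).symm)]
  simp only [weight, LinearMap.coe_mk, AddHom.coe_mk, mul_sum]
  refine sum_le_sum fun j _ => ?_
  calc u (Fin.castLE hkn j) = p j * (u (Fin.castLE hkn j) / p j) :=
        (mul_div_cancel₀ _ (hp j).ne').symm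
    _ ≤ d * (u (Fin.castLE hkn j) / p j) :=
        mul_le_mul_of_nonneg_right (hd j) (div_nonneg (hu _) (hp j).le)

theorem subset_polytope_add (hp : ∀ j, 0 < p j) {d d' l₁ l₂ : ℝ} (hd : ∀ j, p j ≤ d)
    (hd' : ∀ j, p j ≤ d') (hl₁ : 0 < l₁) (hl₂ : 0 < l₂) :
    polytope hkn p (l₁ * d + l₂ * d') (l₁ + l₂) ⊆
      polytope hkn p (l₁ * d) l₁ + polytope hkn p (l₂ * d') l₂ := by
  rintro u ⟨hu, huc, hul⟩
  set h := head hkn u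
  have hh : 0 ≤ h := head_nonneg hu
  have hτ : 0 ≤ u - h := sub_nonneg.2 (head_le hu)
  have hwh : weight hkn p h = weight hkn p u := weight_head u
  have hwτ : weight hkn p (u - h) = 0 := by rw [map_sub, hwh, sub_self]
  have hT : 0 < weight hkn p u := by linarith
  have hB₀ : 0 ≤ ∑ i, (u - h) i := sum_nonneg fun i _ => hτ i
  have hB : ∑ i, (u - h) i = ∑ i, u i - ∑ i, h i := by
    simp only [Pi.sub_apply, sum_sub_distrib]
  have hAd : l₁ * ∑ i, h i ≤ l₁ * (d * weight hkn p u) :=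
    mul_le_mul_of_nonneg_left (sum_head_le_mul_weight hp hd hu) hl₁.le
  have hAd' : l₂ * ∑ i, h i ≤ l₂ * (d' * weight hkn p u) :=
    mul_le_mul_of_nonneg_left (sum_head_le_mul_weight hp hd' hu) hl₂.le
  obtain ⟨t, ⟨ht₀, ht₁⟩, hlt, htl, htc, hct⟩ :=
    exists_share_of_ratio_bounds (c₁ := l₁ * d) (c₂ := l₂ * d') hT (sum_head_pos hu hT)
      hl₁.le hl₂.le hul (by linarith) (by linarith) (by linarith)
  obtain ⟨r, ⟨hr₀, hr₁⟩, hrc, hcr⟩ :=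
    exists_share_of_le_add hB₀ (sub_nonneg.2 htc) (sub_nonneg.2 hct) (by linarith)
  refine ⟨t • h + r • (u - h), ?_, (1 - t) • h + (1 - r) • (u - h), ?_, by module⟩
  · exact smul_add_smul_mem_polytope hkn p hh hτ hwτ ht₀ hr₀ (by linarith) (by rwa [hwh])
  · exact smul_add_smul_mem_polytope hkn p hh hτ hwτ (sub_nonneg.2 ht₁) (sub_nonneg.2 hr₁)
      (by linarith) (by rwa [hwh])

end TruncatedSimplex

theorem stmt_10_general (n k : ℕ) (hkn : k ≤ n)
    (p : Fin k → ℝ) (hp : ∀ j, 0 < p j)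
    (d d' : ℝ) (hd : ∀ j, p j ≤ d) (hd' : ∀ j, p j ≤ d')
    (l₁ l₂ : ℝ) (hl₁ : 0 < l₁) (hl₂ : 0 < l₂) :
    {u : Fin n → ℝ | (∀ i, 0 ≤ u i) ∧ (∑ i, u i ≤ l₁ * d) ∧
        l₁ ≤ ∑ j : Fin k, u (Fin.castLE hkn j) / p j} +
      {u : Fin n → ℝ | (∀ i, 0 ≤ u i) ∧ (∑ i, u i ≤ l₂ * d') ∧
        l₂ ≤ ∑ j : Fin k, u (Fin.castLE hkn j) / p j}
    = {u : Fin n → ℝ | (∀ i, 0 ≤ u i) ∧ (∑ i, u i ≤ l₁ * d + l₂ * d') ∧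
        l₁ + l₂ ≤ ∑ j : Fin k, u (Fin.castLE hkn j) / p j} := by
  exact (TruncatedSimplex.polytope_add_subset hkn p).antisymm
    (TruncatedSimplex.subset_polytope_add hp hd hd' hl₁ hl₂)

/-- Minkowski sum of truncated simplices: P(λ₁,d) + P(λ₂,d') is the polytope
cut out by adding the right-hand sides. -/
theorem stmt_10 (n k : ℕ) (hk1 : 1 ≤ k) (hkn : k ≤ n)
    (p : Fin k → ℝ) (hp : ∀ j, 0 < p j)
    (d d' : ℝ) (hd : ∀ j, p j ≤ d) (hd' : ∀ j, p j ≤ d')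
    (l₁ l₂ : ℝ) (hl₁ : 0 < l₁) (hl₂ : 0 < l₂) :
    {u : Fin n → ℝ | (∀ i, 0 ≤ u i) ∧ (∑ i, u i ≤ l₁ * d) ∧
        l₁ ≤ ∑ j : Fin k, u (Fin.castLE hkn j) / p j} +
      {u : Fin n → ℝ | (∀ i, 0 ≤ u i) ∧ (∑ i, u i ≤ l₂ * d') ∧
        l₂ ≤ ∑ j : Fin k, u (Fin.castLE hkn j) / p j}
    = {u : Fin n → ℝ | (∀ i, 0 ≤ u i) ∧ (∑ i, u i ≤ l₁ * d + l₂ * d') ∧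
        l₁ + l₂ ≤ ∑ j : Fin k, u (Fin.castLE hkn j) / p j} :=
  stmt_10_general n k hkn p hp d d' hd hd' l₁ l₂ hl₁ hl₂
end

section
/- Let n = 3, k = 2, let p₁, p₂ > 0 and d₁, d₂, d₃ ≥ max(p₁, p₂) be reals, and λ₁, λ₂, λ₃ ≥ 0 with D = λ₁d₁+λ₂d₂+λ₃d₃ and Λ = λ₁+λ₂+λ₃. Then the volume of { u ∈ ℝ³ : uᵢ ≥ 0, u₁+u₂+u₃ ≤ D, u₁/p₁+u₂/p₂ ≤ Λ } equals p₁p₂·(D·Λ²/2 − Λ³(p₁+p₂)/6), and the coefficient of λ₁λ₂λ₃ in this polynomial in λ₁, λ₂, λ₃ equals p₁p₂(d₁+d₂+d₃−p₁−p₂). -/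
/-!
On the triangle `u₁, u₂ ≥ 0, u₁/p₁ + u₂/p₂ ≤ Λ` one has
`u₁ + u₂ ≤ max(p₁, p₂) Λ ≤ D`, because `dᵢ ≥ max(p₁, p₂)`. So the region is exactly the solid
under the graph of `D - u₁ - u₂ ≥ 0` over that triangle, and its volume is the iterated integral
`∫₀^{p₁Λ} ∫₀^{p₂(Λ - x/p₁)} (D - x - y) dy dx` of a polynomial.
In `D Λ² = (∑ dᵢλᵢ)(∑ λᵢ)²` the monomial `λ₁λ₂λ₃` has coefficient `2(d₁ + d₂ + d₃)`, and in `Λ³` it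
has coefficient `6`.
-/

open MeasureTheory Set
open scoped ENNReal

theorem setLIntegral_region_between_cc {α : Type*} [MeasurableSpace α] (μ : Measure α)
    {f g : α → ℝ} {s : Set α} (hf : Measurable f) (hg : Measurable g)
    (hs : MeasurableSet s) {F : α × ℝ → ℝ≥0∞} (hF : Measurable F) :
    ∫⁻ p in {p : α × ℝ | p.1 ∈ s ∧ p.2 ∈ Icc (f p.1) (g p.1)}, F p ∂μ.prod volume =
      ∫⁻ x in s, (∫⁻ y in Icc (f x) (g x), F (x, y)) ∂μ := by
  have hR := measurableSet_region_between_cc hf hg hs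
  rw [← lintegral_indicator hR, lintegral_prod _ (hF.indicator hR).aemeasurable,
    ← lintegral_indicator hs]
  congr 1 with x
  by_cases hx : x ∈ s
  · rw [indicator_of_mem hx, ← lintegral_indicator measurableSet_Icc]
    simp only [Set.indicator, mem_ofPred_eq, hx, true_and]
  · simp [Set.indicator, hx]

theorem volume_region_between_cc {α : Type*} [MeasurableSpace α] (μ : Measure α)
    {f g : α → ℝ} {s : Set α} (hf : Measurable f) (hg : Measurable g)
    (hs : MeasurableSet s) :
    μ.prod volume {p : α × ℝ | p.1 ∈ s ∧ p.2 ∈ Icc (f p.1) (g p.1)} =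
      ∫⁻ x in s, ENNReal.ofReal (g x - f x) ∂μ := by
  rw [← setLIntegral_one, setLIntegral_region_between_cc μ hf hg hs measurable_const]
  simp only [setLIntegral_one, Real.volume_Icc]

theorem setLIntegral_Icc_ofReal {f : ℝ → ℝ} {a b : ℝ} (hab : a ≤ b)
    (hf : ContinuousOn f (Icc a b)) (hf₀ : ∀ x ∈ Icc a b, 0 ≤ f x) :
    ∫⁻ x in Icc a b, ENNReal.ofReal (f x) = ENNReal.ofReal (∫ x in a..b, f x) := by
  rw [intervalIntegral.integral_of_le hab, ← integral_Icc_eq_integral_Ioc,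
    ofReal_integral_eq_lintegral_ofReal (hf.integrableOn_Icc)
      ((ae_restrict_iff' measurableSet_Icc).2 (ae_of_all _ hf₀))]

theorem integral_quadratic (c₀ c₁ c₂ a : ℝ) :
    ∫ x in (0:ℝ)..a, (c₀ + c₁ * x + c₂ * x ^ 2) = c₀ * a + c₁ * a ^ 2 / 2 + c₂ * a ^ 3 / 3 := by
  have hi : ∀ f : ℝ → ℝ, Continuous f → IntervalIntegrable f volume 0 a :=
    fun f hf => hf.intervalIntegrable 0 a
  rw [intervalIntegral.integral_add (hi _ (by fun_prop)) (hi _ (by fun_prop)),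
    intervalIntegral.integral_add (hi _ (by fun_prop)) (hi _ (by fun_prop)),
    intervalIntegral.integral_const_mul c₁ (fun x => x), intervalIntegral.integral_const_mul,
    intervalIntegral.integral_const, integral_id, integral_pow]
  norm_num
  ring

theorem volume_preserving_finThree :
    MeasurePreserving (fun u : Fin 3 → ℝ => ((u 0, u 1), u 2)) := by
  have h := (((volume_preserving_finTwoArrow ℝ).prod (MeasurePreserving.id volume)).comp
    (Measure.measurePreserving_swap (μ := volume) (ν := volume))).comp
    (volume_preserving_piFinSuccAbove (fun _ : Fin 3 => ℝ) (Fin.last 2))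
  convert h using 1
  · ext u <;> simp [Fin.removeNth, Fin.succAbove, Fin.last]
  · exact Measure.volume_eq_prod _ _

theorem add_le_max_mul_of_div_add_div_le {p₁ p₂ L x y : ℝ} (hp₁ : 0 < p₁) (hp₂ : 0 < p₂)
    (hx : 0 ≤ x) (hy : 0 ≤ y) (h : x / p₁ + y / p₂ ≤ L) : x + y ≤ max p₁ p₂ * L := by
  calc x + y = p₁ * (x / p₁) + p₂ * (y / p₂) := by field_simp
    _ ≤ max p₁ p₂ * (x / p₁) + max p₁ p₂ * (y / p₂) := by
      gcongr; exacts [le_max_left _ _, le_max_right _ _]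
    _ ≤ max p₁ p₂ * L := by rw [← mul_add]; gcongr

open MvPolynomial

theorem coeff_one_one_one_linear_mul_sum_X_sq {R : Type*} [CommSemiring R] (d : Fin 3 → R) :
    coeff (Finsupp.equivFunOnFinite.symm fun _ : Fin 3 => 1)
      ((∑ i, C (d i) * X i) * (∑ i, X i) ^ 2) = 2 * ∑ i, d i := by
  simp only [Fin.sum_univ_three, sq, mul_add, add_mul, mul_assoc, coeff_add, coeff_C_mul,
    coeff_X_mul', Finsupp.equivFunOnFinite_symm_apply_support, Finite.mem_toFinset,
    Function.mem_support, ne_eq, one_ne_zero, not_false_eq_true, ↓reduceIte,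
    Finsupp.mem_support_iff, Finsupp.coe_tsub, Finsupp.coe_equivFunOnFinite_symm, Pi.sub_apply,
    Finsupp.single_eq_same, tsub_self, not_true_eq_false, mul_zero, zero_ne_one,
    Finsupp.single_eq_of_ne, tsub_zero, coeff_X, Finsupp.ext_iff, Finsupp.single_apply,
    Fin.forall_fin_succ, Fin.succ_zero_eq_one, Fin.succ_one_eq_two, Fin.reduceEq,
    IsEmpty.forall_iff, and_true, and_false, and_self, add_zero, mul_one, zero_add]
  ring

theorem le_mul_sub_div_iff_div_add_div_le {p₁ p₂ L x y : ℝ} (hp₂ : 0 < p₂) :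
    y ≤ p₂ * (L - x / p₁) ↔ x / p₁ + y / p₂ ≤ L := by
  rw [← div_le_iff₀' hp₂]
  constructor <;> intro h <;> linarith

theorem volume_truncated_tetrahedron_eq_lintegral {p₁ p₂ D L : ℝ} (hp₁ : 0 < p₁) (hp₂ : 0 < p₂) :
    volume {u : Fin 3 → ℝ | (∀ i, 0 ≤ u i) ∧ u 0 + u 1 + u 2 ≤ D ∧ u 0 / p₁ + u 1 / p₂ ≤ L} =
      ∫⁻ x in Icc 0 (p₁ * L), ∫⁻ y in Icc 0 (p₂ * (L - x / p₁)), ENNReal.ofReal (D - x - y) := by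
  set T : Set (ℝ × ℝ) := {p | p.1 ∈ Icc 0 (p₁ * L) ∧ p.2 ∈ Icc 0 (p₂ * (L - p.1 / p₁))} with hT
  set R : Set ((ℝ × ℝ) × ℝ) := {q | q.1 ∈ T ∧ q.2 ∈ Icc 0 (D - q.1.1 - q.1.2)} with hR
  have hle : ∀ x y, 0 ≤ y → x / p₁ + y / p₂ ≤ L → x ≤ p₁ * L := fun x y hy h => by
    rw [← div_le_iff₀' hp₁]; linarith [div_nonneg hy hp₂.le]
  have hset : {u : Fin 3 → ℝ | (∀ i, 0 ≤ u i) ∧ u 0 + u 1 + u 2 ≤ D ∧ u 0 / p₁ + u 1 / p₂ ≤ L} =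
      (fun u : Fin 3 → ℝ => ((u 0, u 1), u 2)) ⁻¹' R := by
    ext u
    simp only [hR, hT, mem_ofPred_eq, mem_preimage, mem_Icc, le_mul_sub_div_iff_div_add_div_le hp₂]
    constructor
    · rintro ⟨h₀, hD, hL⟩
      exact ⟨⟨⟨h₀ 0, hle _ _ (h₀ 1) hL⟩, h₀ 1, hL⟩, h₀ 2, by linarith⟩
    · rintro ⟨⟨⟨h₀, -⟩, h₁, hL⟩, h₂, hD⟩
      exact ⟨fun i => by fin_cases i <;> assumption, by linarith, hL⟩
  have hTm : MeasurableSet T :=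
    measurableSet_region_between_cc (f := fun _ => 0) (g := fun x => p₂ * (L - x / p₁))
      measurable_const (by fun_prop) measurableSet_Icc
  have hRm : MeasurableSet R :=
    measurableSet_region_between_cc (f := fun _ => 0) (g := fun p : ℝ × ℝ => D - p.1 - p.2)
      measurable_const (by fun_prop) hTm
  have hvol : volume R = ∫⁻ p in T, ENNReal.ofReal (D - p.1 - p.2) := by
    rw [Measure.volume_eq_prod]
    exact (volume_region_between_cc volume (f := fun _ => 0)
      (g := fun p : ℝ × ℝ => D - p.1 - p.2) measurable_const (by fun_prop) hTm).trans
      (by simp only [sub_zero])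
  rw [hset, volume_preserving_finThree.measure_preimage hRm.nullMeasurableSet, hvol,
    Measure.volume_eq_prod]
  exact setLIntegral_region_between_cc volume (f := fun _ => 0) (g := fun x => p₂ * (L - x / p₁))
    measurable_const (by fun_prop) measurableSet_Icc (by fun_prop)

theorem lintegral_triangle_ofReal_sub_sub {p₁ p₂ D L : ℝ} (hp₁ : 0 < p₁) (hp₂ : 0 < p₂)
    (hL : 0 ≤ L) (hD : max p₁ p₂ * L ≤ D) :
    ∫⁻ x in Icc 0 (p₁ * L), ∫⁻ y in Icc 0 (p₂ * (L - x / p₁)), ENNReal.ofReal (D - x - y) =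
      ENNReal.ofReal (p₁ * p₂ * (D * L ^ 2 / 2 - L ^ 3 * (p₁ + p₂) / 6)) := by
  set B : ℝ → ℝ := fun x => p₂ * (L - x / p₁)
  have hB₀ : ∀ x ∈ Icc 0 (p₁ * L), 0 ≤ B x := fun x hx =>
    (le_mul_sub_div_iff_div_add_div_le hp₂).2 (by rw [zero_div, add_zero, div_le_iff₀' hp₁]; exact hx.2)
  have hsum : ∀ x ∈ Icc 0 (p₁ * L), ∀ y ∈ Icc 0 (B x), x + y ≤ D := fun x hx y hy =>
    (add_le_max_mul_of_div_add_div_le hp₁ hp₂ hx.1 hy.1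
      ((le_mul_sub_div_iff_div_add_div_le hp₂).1 hy.2)).trans hD
  have hinner : ∀ x ∈ Icc 0 (p₁ * L),
      ∫⁻ y in Icc 0 (B x), ENNReal.ofReal (D - x - y) =
        ENNReal.ofReal ((D - x) * B x - B x ^ 2 / 2) := by
    intro x hx
    rw [setLIntegral_Icc_ofReal (hB₀ x hx) (by fun_prop)
      (fun y hy => by linarith [hsum x hx y hy])]
    congr 1
    rw [intervalIntegral.integral_comp_sub_left (fun y => y), integral_id]
    ring
  rw [setLIntegral_congr_fun measurableSet_Icc hinner,
    setLIntegral_Icc_ofReal (by positivity) (by fun_prop)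
      (fun x hx => by nlinarith [hsum x hx (B x) ⟨hB₀ x hx, le_rfl⟩, hB₀ x hx])]
  congr 1
  calc ∫ x in (0:ℝ)..p₁ * L, ((D - x) * B x - B x ^ 2 / 2)
      = ∫ x in (0:ℝ)..p₁ * L, ((p₂ * L * D - (p₂ * L) ^ 2 / 2)
          + (p₂ * L * (p₂ / p₁) - D * (p₂ / p₁) - p₂ * L) * x
          + (p₂ / p₁ - (p₂ / p₁) ^ 2 / 2) * x ^ 2) := by
        congr 1 with x; ring
    _ = p₁ * p₂ * (D * L ^ 2 / 2 - L ^ 3 * (p₁ + p₂) / 6) := by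
        rw [integral_quadratic]; field_simp; ring

/-- In ℝ³ with k = 2: the volume of the truncated tetrahedron is
p₁p₂·(D·Λ²/2 − Λ³(p₁+p₂)/6), and the coefficient of λ₁λ₂λ₃ in this polynomial
is p₁p₂(d₁+d₂+d₃−p₁−p₂). -/
theorem stmt_11 (p₁ p₂ : ℝ) (hp₁ : 0 < p₁) (hp₂ : 0 < p₂)
    (d : Fin 3 → ℝ) (hd : ∀ i, max p₁ p₂ ≤ d i) :
    (∀ l : Fin 3 → ℝ, (∀ i, 0 ≤ l i) →
      volume {u : Fin 3 → ℝ | (∀ i, 0 ≤ u i) ∧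
          (u 0 + u 1 + u 2 ≤ ∑ i, l i * d i) ∧
          u 0 / p₁ + u 1 / p₂ ≤ ∑ i, l i}
        = ENNReal.ofReal (p₁ * p₂ *
            ((∑ i, l i * d i) * (∑ i, l i) ^ 2 / 2 -
              (∑ i, l i) ^ 3 * (p₁ + p₂) / 6)))
    ∧ MvPolynomial.coeff (Finsupp.equivFunOnFinite.symm fun _ : Fin 3 => 1)
        (C (p₁ * p₂ / 2) *
            (∑ i : Fin 3, C (d i) * (X i : MvPolynomial (Fin 3) ℝ)) *
            (∑ i : Fin 3, (X i : MvPolynomial (Fin 3) ℝ)) ^ 2 -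
          C (p₁ * p₂ * (p₁ + p₂) / 6) *
            (∑ i : Fin 3, (X i : MvPolynomial (Fin 3) ℝ)) ^ 3)
      = p₁ * p₂ * (d 0 + d 1 + d 2 - p₁ - p₂) := by
  refine ⟨fun l hl => ?_, ?_⟩
  · have hD : max p₁ p₂ * ∑ i, l i ≤ ∑ i, l i * d i := by
      rw [Finset.mul_sum]
      exact Finset.sum_le_sum fun i _ => by
        rw [mul_comm (l i)]; exact mul_le_mul_of_nonneg_right (hd i) (hl i)
    rw [volume_truncated_tetrahedron_eq_lintegral hp₁ hp₂,
      lintegral_triangle_ofReal_sub_sub hp₁ hp₂ (Finset.sum_nonneg fun i _ => hl i) hD]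
  · have hcube : (∑ i : Fin 3, (X i : MvPolynomial (Fin 3) ℝ)) ^ 3 =
        (∑ i, C ((1 : Fin 3 → ℝ) i) * X i) * (∑ i, X i) ^ 2 := by
      simp only [Pi.one_apply, map_one, one_mul]; ring
    rw [coeff_sub, mul_assoc, coeff_C_mul, coeff_C_mul, hcube,
      coeff_one_one_one_linear_mul_sum_X_sq, coeff_one_one_one_linear_mul_sum_X_sq]
    simp only [Fin.sum_univ_three, Pi.one_apply]
    ring
end
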